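/- Average heat released by the dephased qubit engine: in the qubit Otto setup, the dephased average heat released ⟨⟨Q_C⟩⟩ := Tr[ρ₁ H₁] − Tr[V Δ₂(Φ(Δ₂(U ρ₁ U†))) V† H₁] equals −2(θ + (1 − 2θ)(δ′ + ζ − 2δ′ζ)) ν₁ tanh(βν₁); consequently the dephased average work ⟨⟨W⟩⟩ := ⟨⟨Q_M⟩⟩ + ⟨⟨Q_C⟩⟩, with ⟨⟨Q_M⟩⟩ := Tr[Φ(Δ₂(Uρ₁U†))H₂] − Tr[Uρ₁U†H₂], equals 2((1−2δ′)θν₂ − (θ + (1−2θ)(δ′+ζ−2δ′ζ))ν₁) tanh(βν₁). -/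

import Mathlib

/-!
The states met along the cycle are diagonal in one of the two bases, and all the energies are
traces against `|u⟩⟨u| - |v⟩⟨v|`, so only the polarization `⟨u|X|u⟩ - ⟨v|X|v⟩` matters. The Gibbs
state has polarization `-tanh(βν₁)`, and each stroke multiplies it by a factor: the unitary `U`,
read from the basis `e` to the basis `f`, by `1 - 2δ′`; the unital trace-preserving channel `Φ` by
`1 - 2θ`; the unitary `V`, read from `f` to `e`, by `1 - 2ζ`; dephasing leaves it unchanged. The
two formulas then follow from `1 - (1 - 2θ)(1 - 2δ′)(1 - 2ζ) = 2(θ + (1 - 2θ)(δ′ + ζ - 2δ′ζ))`.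
-/

open Matrix

namespace Matrix

variable {m n ι R : Type*} [Fintype n]

section CommSemiring

variable [CommSemiring R]

theorem vecMulVec_mul_mul_vecMulVec (a b c d : n → R) (X : Matrix n n R) :
    vecMulVec a b * X * vecMulVec c d = (b ⬝ᵥ (X *ᵥ c)) • vecMulVec a d := by
  rw [Matrix.mul_assoc, mul_vecMulVec, vecMulVec_mul_vecMulVec, vecMulVec_smul]

theorem trace_mul_vecMulVec (X : Matrix n n R) (v w : n → R) :
    (X * vecMulVec v w).trace = w ⬝ᵥ (X *ᵥ v) := by
  rw [mul_vecMulVec, trace_vecMulVec, dotProduct_comm]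

theorem dotProduct_vecMulVec_mulVec (a b c d : n → R) :
    a ⬝ᵥ (vecMulVec b c *ᵥ d) = (a ⬝ᵥ b) * (c ⬝ᵥ d) := by
  rw [vecMulVec_mulVec, dotProduct_smul, MulOpposite.smul_eq_mul_unop, MulOpposite.unop_op]

end CommSemiring

section StarRing

variable [CommRing R] [StarRing R]

theorem mul_vecMulVec_star_mul_conjTranspose [Fintype m] (A : Matrix m n R) (v : n → R) :
    A * vecMulVec v (star v) * Aᴴ = vecMulVec (A *ᵥ v) (star (A *ᵥ v)) := by
  rw [mul_vecMulVec, vecMulVec_mul, star_mulVec]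

theorem star_mulVec_dotProduct_mulVec [Fintype m] [DecidableEq n] {U : Matrix m n R}
    (hU : Uᴴ * U = 1) (w : n → R) : star (U *ᵥ w) ⬝ᵥ (U *ᵥ w) = star w ⬝ᵥ w := by
  rw [star_mulVec, ← dotProduct_mulVec, mulVec_mulVec, hU, one_mulVec]

theorem star_dotProduct_conjTranspose_mulVec [Fintype m] (U : Matrix m n R) (u : m → R)
    (w : n → R) : star w ⬝ᵥ (Uᴴ *ᵥ u) = star (star u ⬝ᵥ (U *ᵥ w)) := by
  rw [← star_dotProduct, star_mulVec, dotProduct_mulVec]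

theorem sum_vecMulVec_star_eq_one [DecidableEq n] {b : n → n → R}
    (hb : ∀ i j, star (b i) ⬝ᵥ b j = (1 : Matrix n n R) i j) :
    ∑ i, vecMulVec (b i) (star (b i)) = 1 := by
  set M : Matrix n n R := (of b)ᵀ
  have hM : Mᴴ * M = 1 := by
    ext i j
    rw [← hb, mul_apply, dotProduct]
    rfl
  ext i j
  rw [← mul_eq_one_comm.mp hM, mul_apply, sum_apply]
  rfl

structure IsOrthonormalPair (u v : n → R) : Prop where
  star_dotProduct_fst : star u ⬝ᵥ u = 1
  star_dotProduct_snd : star v ⬝ᵥ v = 1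
  star_dotProduct_fst_snd : star u ⬝ᵥ v = 0

def polarization (u v : n → R) : Matrix n n R →ₗ[R] R where
  toFun X := star u ⬝ᵥ (X *ᵥ u) - star v ⬝ᵥ (X *ᵥ v)
  map_add' X Y := by simp only [add_mulVec, dotProduct_add]; ring
  map_smul' c X := by simp only [smul_mulVec, dotProduct_smul, smul_eq_mul, RingHom.id_apply]; ring

theorem polarization_apply (u v : n → R) (X : Matrix n n R) :
    polarization u v X = star u ⬝ᵥ (X *ᵥ u) - star v ⬝ᵥ (X *ᵥ v) := rfl

theorem trace_mul_smul_sub_vecMulVec (u v : n → R) (c : R) (X : Matrix n n R) :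
    (X * (c • (vecMulVec u (star u) - vecMulVec v (star v)))).trace = c * polarization u v X := by
  rw [Matrix.mul_smul, trace_smul, mul_sub, trace_sub, trace_mul_vecMulVec, trace_mul_vecMulVec,
    smul_eq_mul, polarization_apply]

def krausMap [Fintype ι] (K : ι → Matrix n n R) : Matrix n n R →ₗ[R] Matrix n n R where
  toFun X := ∑ k, K k * X * (K k)ᴴ
  map_add' X Y := by simp only [mul_add, add_mul, Finset.sum_add_distrib]
  map_smul' c X := by simp only [Matrix.mul_smul, smul_mul, Finset.smul_sum, RingHom.id_apply]

theorem krausMap_apply [Fintype ι] (K : ι → Matrix n n R) (X : Matrix n n R) :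
    krausMap K X = ∑ k, K k * X * (K k)ᴴ := rfl

theorem krausMap_one [Fintype ι] [DecidableEq n] {K : ι → Matrix n n R}
    (hK : ∑ k, K k * (K k)ᴴ = 1) : krausMap K 1 = 1 := by
  simpa only [krausMap_apply, Matrix.mul_one] using hK

theorem trace_krausMap [Fintype ι] [DecidableEq n] {K : ι → Matrix n n R}
    (hK : ∑ k, (K k)ᴴ * K k = 1) (X : Matrix n n R) : (krausMap K X).trace = X.trace := by
  simp only [krausMap_apply, trace_sum, Matrix.mul_assoc, trace_mul_comm (K _)]
  rw [← trace_sum, ← Finset.mul_sum, hK, Matrix.mul_one]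

namespace IsOrthonormalPair

theorem star_dotProduct_snd_fst {u v : n → R} (h : IsOrthonormalPair u v) : star v ⬝ᵥ u = 0 := by
  rw [star_dotProduct, h.star_dotProduct_fst_snd, star_zero]

theorem polarization_smul_add_smul {u v : n → R} (h : IsOrthonormalPair u v) (a b : R) :
    polarization u v (a • vecMulVec u (star u) + b • vecMulVec v (star v)) = a - b := by
  simp [polarization_apply, add_mulVec, smul_mulVec, dotProduct_vecMulVec_mulVec, h.1, h.2, h.3,
    h.star_dotProduct_snd_fst]

theorem polarization_one [DecidableEq n] {u v : n → R} (h : IsOrthonormalPair u v) :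
    polarization u v 1 = 0 := by
  rw [polarization_apply, one_mulVec, one_mulVec, h.1, h.2, sub_self]

variable {u v : Fin 2 → R}

theorem vecMulVec_add_vecMulVec (h : IsOrthonormalPair u v) :
    vecMulVec u (star u) + vecMulVec v (star v) = 1 := by
  have hb : ∀ i j, star (![u, v] i) ⬝ᵥ ![u, v] j = (1 : Matrix (Fin 2) (Fin 2) R) i j := by
    intro i j
    fin_cases i <;> fin_cases j <;> simp [h.1, h.2, h.3, h.star_dotProduct_snd_fst]
  simpa [Fin.sum_univ_two] using sum_vecMulVec_star_eq_one hb

theorem trace_eq (h : IsOrthonormalPair u v) (X : Matrix (Fin 2) (Fin 2) R) :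
    X.trace = star u ⬝ᵥ (X *ᵥ u) + star v ⬝ᵥ (X *ᵥ v) := by
  conv_lhs => rw [← Matrix.mul_one X, ← h.vecMulVec_add_vecMulVec]
  rw [Matrix.mul_add, trace_add, trace_mul_vecMulVec, trace_mul_vecMulVec]

theorem polarization_map_smul_add_smul (h : IsOrthonormalPair u v)
    (Φ : Matrix (Fin 2) (Fin 2) R →ₗ[R] Matrix (Fin 2) (Fin 2) R) (hΦ₁ : Φ 1 = 1)
    (hΦtr : ∀ X, (Φ X).trace = X.trace) (a b : R) :
    polarization u v (Φ (a • vecMulVec u (star u) + b • vecMulVec v (star v))) =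
      (a - b) * (1 - 2 * (star v ⬝ᵥ (Φ (vecMulVec u (star u)) *ᵥ v))) := by
  have hv : vecMulVec v (star v) = 1 - vecMulVec u (star u) :=
    eq_sub_of_add_eq' h.vecMulVec_add_vecMulVec
  have htr : star u ⬝ᵥ (Φ (vecMulVec u (star u)) *ᵥ u) +
      star v ⬝ᵥ (Φ (vecMulVec u (star u)) *ᵥ v) = 1 := by
    rw [← h.trace_eq, hΦtr, trace_vecMulVec, dotProduct_comm, h.1]
  rw [hv, map_add, map_smul, map_smul, map_sub, hΦ₁, map_add, map_smul, map_smul, map_sub,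
    h.polarization_one, polarization_apply, smul_eq_mul, smul_eq_mul]
  linear_combination (a - b) * htr

end IsOrthonormalPair

end StarRing

theorem star_dotProduct_vecMulVec_star_mulVec (u w : n → ℂ) :
    star w ⬝ᵥ (vecMulVec u (star u) *ᵥ w) = ((‖star u ⬝ᵥ w‖ ^ 2 : ℝ) : ℂ) := by
  rw [dotProduct_vecMulVec_mulVec, star_dotProduct w, Complex.star_def, Complex.conj_mul']
  push_cast
  rfl

theorem norm_star_dotProduct_comm (u w : n → ℂ) : ‖star w ⬝ᵥ u‖ = ‖star u ⬝ᵥ w‖ := by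
  rw [star_dotProduct, norm_star]

theorem polarization_vecMulVec_star (u v w : n → ℂ) :
    polarization u v (vecMulVec w (star w)) =
      ((‖star u ⬝ᵥ w‖ ^ 2 : ℝ) : ℂ) - ((‖star v ⬝ᵥ w‖ ^ 2 : ℝ) : ℂ) := by
  rw [polarization_apply, star_dotProduct_vecMulVec_star_mulVec,
    star_dotProduct_vecMulVec_star_mulVec]
  simp only [norm_star_dotProduct_comm (w := w)]

namespace IsOrthonormalPair

theorem norm_sq_add_norm_sq {u v w : Fin 2 → ℂ} (h : IsOrthonormalPair u v)
    (hw : star w ⬝ᵥ w = 1) : ‖star u ⬝ᵥ w‖ ^ 2 + ‖star v ⬝ᵥ w‖ ^ 2 = 1 := by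
  have := congrArg (fun X => star w ⬝ᵥ (X *ᵥ w)) h.vecMulVec_add_vecMulVec
  simp only [add_mulVec, dotProduct_add, star_dotProduct_vecMulVec_star_mulVec, one_mulVec,
    hw] at this
  exact_mod_cast this

theorem polarization_conj_smul_add_smul {ep em fp fm : Fin 2 → ℂ}
    (he : IsOrthonormalPair ep em) (hf : IsOrthonormalPair fp fm)
    {U : Matrix (Fin 2) (Fin 2) ℂ} (hU : Uᴴ * U = 1) (a b : ℂ) :
    polarization fp fm (U * (a • vecMulVec ep (star ep) + b • vecMulVec em (star em)) * Uᴴ) =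
      (a - b) * (1 - 2 * ((‖star fp ⬝ᵥ (U *ᵥ em)‖ ^ 2 : ℝ) : ℂ)) := by
  -- The transition probabilities `‖⟨f|U e⟩‖²` form a doubly stochastic matrix: its columns sum
  -- to one because `U e` is a unit vector, its rows because `Uᴴ f` is.
  have hUadj : Uᴴᴴ * Uᴴ = 1 := by rw [conjTranspose_conjTranspose, mul_eq_one_comm.mp hU]
  have colp := hf.norm_sq_add_norm_sq (w := U *ᵥ ep)
    (by rw [star_mulVec_dotProduct_mulVec hU, he.1])
  have colm := hf.norm_sq_add_norm_sq (w := U *ᵥ em)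
    (by rw [star_mulVec_dotProduct_mulVec hU, he.2])
  have rowp := he.norm_sq_add_norm_sq (w := Uᴴ *ᵥ fp)
    (by rw [star_mulVec_dotProduct_mulVec hUadj, hf.1])
  rw [star_dotProduct_conjTranspose_mulVec, star_dotProduct_conjTranspose_mulVec, norm_star,
    norm_star] at rowp
  rw [Matrix.mul_add, Matrix.add_mul, Matrix.mul_smul, Matrix.mul_smul, Matrix.smul_mul,
    Matrix.smul_mul, mul_vecMulVec_star_mul_conjTranspose, mul_vecMulVec_star_mul_conjTranspose,
    map_add, map_smul, map_smul, polarization_vecMulVec_star, polarization_vecMulVec_star,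
    smul_eq_mul, smul_eq_mul]
  have colp' := congrArg ((↑) : ℝ → ℂ) colp
  have colm' := congrArg ((↑) : ℝ → ℂ) colm
  have rowp' := congrArg ((↑) : ℝ → ℂ) rowp
  push_cast at colp' colm' rowp' ⊢
  linear_combination (-a) * colp' + (-b) * colm' + 2 * a * rowp'

end IsOrthonormalPair

end Matrix

theorem Real.exp_neg_sub_exp_div_two_cosh (x : ℝ) :
    (Real.exp (-x) - Real.exp x) / (2 * Real.cosh x) = -Real.tanh x := by
  rw [Real.tanh_eq_sinh_div_cosh, Real.sinh_eq]
  field_simp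
  ring

theorem dephased_heat_released_and_work_qubit_general
    (β ν₁ ν₂ : ℝ)
    (ep em fp fm : Fin 2 → ℂ)
    (hep : star ep ⬝ᵥ ep = 1) (hem : star em ⬝ᵥ em = 1) (hepm : star ep ⬝ᵥ em = 0)
    (hfp : star fp ⬝ᵥ fp = 1) (hfm : star fm ⬝ᵥ fm = 1) (hfpm : star fp ⬝ᵥ fm = 0)
    (H₁ H₂ ρ₁ : Matrix (Fin 2) (Fin 2) ℂ)
    (hH₁ : H₁ = (ν₁ : ℂ) • (vecMulVec ep (star ep) - vecMulVec em (star em)))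
    (hH₂ : H₂ = (ν₂ : ℂ) • (vecMulVec fp (star fp) - vecMulVec fm (star fm)))
    (hρ₁ : ρ₁ = ((2 * Real.cosh (β * ν₁) : ℝ) : ℂ)⁻¹ •
        ((Real.exp (-(β * ν₁)) : ℂ) • vecMulVec ep (star ep) +
         (Real.exp (β * ν₁) : ℂ) • vecMulVec em (star em)))
    (U V : Matrix (Fin 2) (Fin 2) ℂ)
    (hU : Uᴴ * U = 1)
    (hV : Vᴴ * V = 1)
    {K : ℕ} (Kr : Fin K → Matrix (Fin 2) (Fin 2) ℂ)
    (hKr : ∑ k, (Kr k)ᴴ * Kr k = 1) (hKr' : ∑ k, Kr k * (Kr k)ᴴ = 1)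
    (Φ : Matrix (Fin 2) (Fin 2) ℂ → Matrix (Fin 2) (Fin 2) ℂ)
    (hΦ : ∀ X, Φ X = ∑ k, Kr k * X * (Kr k)ᴴ)
    (Δ₂ : Matrix (Fin 2) (Fin 2) ℂ → Matrix (Fin 2) (Fin 2) ℂ)
    (hΔ₂ : ∀ X, Δ₂ X = vecMulVec fp (star fp) * X * vecMulVec fp (star fp) +
        vecMulVec fm (star fm) * X * vecMulVec fm (star fm))
    (δ' : ℝ) (hδ' : δ' = ‖star fp ⬝ᵥ (U *ᵥ em)‖ ^ 2)
    (θ : ℂ) (hθ : θ = star fm ⬝ᵥ (Φ (vecMulVec fp (star fp)) *ᵥ fm))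
    (ζ : ℝ) (hζ : ζ = ‖star ep ⬝ᵥ (V *ᵥ fm)‖ ^ 2) :
    (ρ₁ * H₁).trace - (V * Δ₂ (Φ (Δ₂ (U * ρ₁ * Uᴴ))) * Vᴴ * H₁).trace =
      -2 * (θ + (1 - 2 * θ) * ((δ' : ℂ) + (ζ : ℂ) - 2 * (δ' : ℂ) * (ζ : ℂ))) * (ν₁ : ℂ) *
        (Real.tanh (β * ν₁) : ℂ) ∧
    ((Φ (Δ₂ (U * ρ₁ * Uᴴ)) * H₂).trace - (U * ρ₁ * Uᴴ * H₂).trace) +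
      ((ρ₁ * H₁).trace - (V * Δ₂ (Φ (Δ₂ (U * ρ₁ * Uᴴ))) * Vᴴ * H₁).trace) =
      2 * ((1 - 2 * (δ' : ℂ)) * θ * (ν₂ : ℂ) -
          (θ + (1 - 2 * θ) * ((δ' : ℂ) + (ζ : ℂ) - 2 * (δ' : ℂ) * (ζ : ℂ))) * (ν₁ : ℂ)) *
        (Real.tanh (β * ν₁) : ℂ) := by
  have he : IsOrthonormalPair ep em := ⟨hep, hem, hepm⟩
  have hf : IsOrthonormalPair fp fm := ⟨hfp, hfm, hfpm⟩
  obtain rfl : Φ = krausMap Kr := funext hΦ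
  have hΔ : ∀ X, Δ₂ X = (star fp ⬝ᵥ (X *ᵥ fp)) • vecMulVec fp (star fp) +
      (star fm ⬝ᵥ (X *ᵥ fm)) • vecMulVec fm (star fm) := fun X => by
    rw [hΔ₂, vecMulVec_mul_mul_vecMulVec, vecMulVec_mul_mul_vecMulVec]
  set x := β * ν₁
  have hρ : ρ₁ = ((Real.exp (-x) / (2 * Real.cosh x) : ℝ) : ℂ) • vecMulVec ep (star ep) +
      ((Real.exp x / (2 * Real.cosh x) : ℝ) : ℂ) • vecMulVec em (star em) := by
    rw [hρ₁, smul_add, smul_smul, smul_smul, div_eq_inv_mul, div_eq_inv_mul]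
    push_cast
    rfl
  have hρpol : polarization ep em ρ₁ = -Real.tanh x := by
    rw [hρ, he.polarization_smul_add_smul, ← Complex.ofReal_sub, ← sub_div,
      Real.exp_neg_sub_exp_div_two_cosh, Complex.ofReal_neg]
  have hApol : polarization fp fm (U * ρ₁ * Uᴴ) =
      polarization ep em ρ₁ * (1 - 2 * δ') := by
    rw [hρ, he.polarization_conj_smul_add_smul hf hU, he.polarization_smul_add_smul, hδ']
  have hΦpol : polarization fp fm (krausMap Kr (Δ₂ (U * ρ₁ * Uᴴ))) =
      polarization fp fm (U * ρ₁ * Uᴴ) * (1 - 2 * θ) := by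
    rw [hΔ, hf.polarization_map_smul_add_smul _ (krausMap_one hKr') (trace_krausMap hKr), hθ]
    rfl
  have hVpol : polarization ep em (V * Δ₂ (krausMap Kr (Δ₂ (U * ρ₁ * Uᴴ))) * Vᴴ) =
      polarization fp fm (krausMap Kr (Δ₂ (U * ρ₁ * Uᴴ))) * (1 - 2 * ζ) := by
    rw [hΔ, hf.polarization_conj_smul_add_smul he hV, hζ]
    rfl
  rw [hH₁, hH₂]
  simp only [trace_mul_smul_sub_vecMulVec]
  rw [hVpol, hΦpol, hApol, hρpol]
  constructor <;> ring

/-- Average heat released by the dephased qubit engine: in the qubit Otto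
setup the dephased average heat released
`⟨⟨Q_C⟩⟩ := Tr[ρ₁ H₁] − Tr[V Δ₂(Φ(Δ₂(U ρ₁ Uᴴ))) Vᴴ H₁]` equals
`−2 (θ + (1 − 2θ)(δ′ + ζ − 2δ′ζ)) ν₁ tanh(βν₁)`; consequently the dephased average work
`⟨⟨W⟩⟩ := ⟨⟨Q_M⟩⟩ + ⟨⟨Q_C⟩⟩`, with `⟨⟨Q_M⟩⟩ := Tr[Φ(Δ₂(Uρ₁Uᴴ))H₂] − Tr[Uρ₁UᴴH₂]`, equals
`2 ((1 − 2δ′) θ ν₂ − (θ + (1 − 2θ)(δ′ + ζ − 2δ′ζ)) ν₁) tanh(βν₁)`. -/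
theorem dephased_heat_released_and_work_qubit
    (β ν₁ ν₂ : ℝ) (hβ : 0 < β) (hν₁ : 0 < ν₁) (hν₂ : 0 < ν₂)
    (ep em fp fm : Fin 2 → ℂ)
    (hep : star ep ⬝ᵥ ep = 1) (hem : star em ⬝ᵥ em = 1) (hepm : star ep ⬝ᵥ em = 0)
    (hfp : star fp ⬝ᵥ fp = 1) (hfm : star fm ⬝ᵥ fm = 1) (hfpm : star fp ⬝ᵥ fm = 0)
    (H₁ H₂ ρ₁ : Matrix (Fin 2) (Fin 2) ℂ)
    (hH₁ : H₁ = (ν₁ : ℂ) • (vecMulVec ep (star ep) - vecMulVec em (star em)))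
    (hH₂ : H₂ = (ν₂ : ℂ) • (vecMulVec fp (star fp) - vecMulVec fm (star fm)))
    (hρ₁ : ρ₁ = ((2 * Real.cosh (β * ν₁) : ℝ) : ℂ)⁻¹ •
        ((Real.exp (-(β * ν₁)) : ℂ) • vecMulVec ep (star ep) +
         (Real.exp (β * ν₁) : ℂ) • vecMulVec em (star em)))
    (U V : Matrix (Fin 2) (Fin 2) ℂ)
    (hU : Uᴴ * U = 1) (hU' : U * Uᴴ = 1)
    (hV : Vᴴ * V = 1) (hV' : V * Vᴴ = 1)
    {K : ℕ} (Kr : Fin K → Matrix (Fin 2) (Fin 2) ℂ)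
    (hKr : ∑ k, (Kr k)ᴴ * Kr k = 1) (hKr' : ∑ k, Kr k * (Kr k)ᴴ = 1)
    (Φ : Matrix (Fin 2) (Fin 2) ℂ → Matrix (Fin 2) (Fin 2) ℂ)
    (hΦ : ∀ X, Φ X = ∑ k, Kr k * X * (Kr k)ᴴ)
    (Δ₂ : Matrix (Fin 2) (Fin 2) ℂ → Matrix (Fin 2) (Fin 2) ℂ)
    (hΔ₂ : ∀ X, Δ₂ X = vecMulVec fp (star fp) * X * vecMulVec fp (star fp) +
        vecMulVec fm (star fm) * X * vecMulVec fm (star fm))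
    (δ' : ℝ) (hδ' : δ' = ‖star fp ⬝ᵥ (U *ᵥ em)‖ ^ 2)
    (θ : ℂ) (hθ : θ = star fm ⬝ᵥ (Φ (vecMulVec fp (star fp)) *ᵥ fm))
    (ζ : ℝ) (hζ : ζ = ‖star ep ⬝ᵥ (V *ᵥ fm)‖ ^ 2) :
    (ρ₁ * H₁).trace - (V * Δ₂ (Φ (Δ₂ (U * ρ₁ * Uᴴ))) * Vᴴ * H₁).trace =
      -2 * (θ + (1 - 2 * θ) * ((δ' : ℂ) + (ζ : ℂ) - 2 * (δ' : ℂ) * (ζ : ℂ))) * (ν₁ : ℂ) *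
        (Real.tanh (β * ν₁) : ℂ) ∧
    ((Φ (Δ₂ (U * ρ₁ * Uᴴ)) * H₂).trace - (U * ρ₁ * Uᴴ * H₂).trace) +
      ((ρ₁ * H₁).trace - (V * Δ₂ (Φ (Δ₂ (U * ρ₁ * Uᴴ))) * Vᴴ * H₁).trace) =
      2 * ((1 - 2 * (δ' : ℂ)) * θ * (ν₂ : ℂ) -
          (θ + (1 - 2 * θ) * ((δ' : ℂ) + (ζ : ℂ) - 2 * (δ' : ℂ) * (ζ : ℂ))) * (ν₁ : ℂ)) *
        (Real.tanh (β * ν₁) : ℂ) :=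
  dephased_heat_released_and_work_qubit_general β ν₁ ν₂ ep em fp fm hep hem hepm hfp hfm hfpm H₁ H₂
    ρ₁ hH₁ hH₂ hρ₁ U V hU hV Kr hKr hKr' Φ hΦ Δ₂ hΔ₂ δ' hδ' θ hθ ζ hζ
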